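/- arXiv:1311.2905 — 5 statements merged into one kernel-verified Lean document; each statement's English description precedes it below -/
import Mathlib

section
/- (Hannabuss–Takahashi decomposition.) Let Λ ∈ SO₀(1,2) and suppose that the x₂-component of the vector Λ (1,0,−1) is nonzero (equivalently, in the Iwasawa decomposition Λ = R₀(α) Λ₁(t′) D(q′) the rotation angle satisfies cos α ≠ 0). Then there exist unique s, t, q ∈ ℝ and k ∈ {0,1} with Λ = Λ₂(s) Pᵏ Λ₁(t) D(q), where P = diag(1,−1,−1) = R₀(π). -/
open Matrix

noncomputable section

/-- The Minkowski bilinear form `η(x,y) = x₀y₀ − x₁y₁ − x₂y₂` on ℝ³. -/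
def mink (x y : Fin 3 → ℝ) : ℝ := x 0 * y 0 - x 1 * y 1 - x 2 * y 2

/-- The Minkowski quadratic form `Q(x) = η(x,x)`. -/
def Qf (x : Fin 3 → ℝ) : ℝ := mink x x

/-- The Minkowski metric matrix `diag(1,−1,−1)`. -/
def etaM : Matrix (Fin 3) (Fin 3) ℝ := !![1, 0, 0; 0, -1, 0; 0, 0, -1]

/-- The Lorentz group `O(1,2)`, as a set of 3×3 real matrices. -/
def O12 : Set (Matrix (Fin 3) (Fin 3) ℝ) := {L | L * etaM * Lᵀ = etaM}

/-- The proper orthochronous Lorentz group `SO₀(1,2)`. -/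
def SO012 : Set (Matrix (Fin 3) (Fin 3) ℝ) :=
  {L | L * etaM * Lᵀ = etaM ∧ L.det = 1 ∧ 0 < L 0 0}

/-- The rotation `R₀(α)` around the `x₀`-axis. -/
def R0 (α : ℝ) : Matrix (Fin 3) (Fin 3) ℝ :=
  !![1, 0, 0; 0, Real.cos α, -Real.sin α; 0, Real.sin α, Real.cos α]

/-- The boost `Λ₁(t)` leaving the `x₁`-axis invariant. -/
def B1 (t : ℝ) : Matrix (Fin 3) (Fin 3) ℝ :=
  !![Real.cosh t, 0, Real.sinh t; 0, 1, 0; Real.sinh t, 0, Real.cosh t]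

/-- The boost `Λ₂(s)` leaving the `x₂`-axis invariant. -/
def B2 (s : ℝ) : Matrix (Fin 3) (Fin 3) ℝ :=
  !![Real.cosh s, Real.sinh s, 0; Real.sinh s, Real.cosh s, 0; 0, 0, 1]

/-- The horospherical translation `D(q)`. -/
def Dm (q : ℝ) : Matrix (Fin 3) (Fin 3) ℝ :=
  !![1 + q ^ 2 / 2, q, q ^ 2 / 2; q, 1, q; -(q ^ 2 / 2), -q, 1 - q ^ 2 / 2]

/-- The time reflection `T = diag(−1,1,1)`. -/
def Tm : Matrix (Fin 3) (Fin 3) ℝ := !![-1, 0, 0; 0, 1, 0; 0, 0, 1]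

/-- The space reflection `P = diag(1,−1,−1)`. -/
def Pm : Matrix (Fin 3) (Fin 3) ℝ := !![1, 0, 0; 0, -1, 0; 0, 0, -1]

/-! An element of `SO₀(1,2)` maps the future null vector `n = (1,0,−1)` to a future null vector.
On `n`, `Λ₂(s) Pᵏ Λ₁(t)` gives `e^{−t} (cosh s, sinh s, −(−1)ᵏ)`, so every future null `v` with
`v₂ ≠ 0` is reached by exactly one `(s, t, k)`, read off from `v`. The stabiliser of `n` in
`SO(1,2)` is `{D(q)}`, hence `Λ = Λ₂(s) Pᵏ Λ₁(t) D(q)` for some `q`, and `q` is unique because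
`Λ₂(s) Pᵏ Λ₁(t)` is invertible. -/

open Real

section Lorentz

variable {A L N : Matrix (Fin 3) (Fin 3) ℝ}

lemma mul_etaM_mul_transpose_apply (L : Matrix (Fin 3) (Fin 3) ℝ) (i j : Fin 3) :
    (L * etaM * Lᵀ) i j = mink (L i) (L j) := by
  simp [Matrix.mul_apply, Fin.sum_univ_three, etaM, mink]
  ring

lemma mink_rows_of_mem_O12 (hL : L ∈ O12) (i j : Fin 3) : mink (L i) (L j) = etaM i j := by
  rw [← mul_etaM_mul_transpose_apply, hL]

lemma mink_eq_dotProduct (x y : Fin 3 → ℝ) : mink x y = x ⬝ᵥ etaM *ᵥ y := by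
  simp [mink, etaM, dotProduct, Fin.sum_univ_three, Matrix.mulVec]
  ring

lemma etaM_mul_self : etaM * etaM = 1 := by
  ext i j; fin_cases i <;> fin_cases j <;> simp [etaM]

lemma one_mem_O12 : (1 : Matrix (Fin 3) (Fin 3) ℝ) ∈ O12 := by
  simp [O12]

lemma mul_mem_O12 (hA : A ∈ O12) (hN : N ∈ O12) : A * N ∈ O12 := by
  change A * N * etaM * (A * N)ᵀ = etaM
  rw [Matrix.transpose_mul]
  calc A * N * etaM * (Nᵀ * Aᵀ) = A * (N * etaM * Nᵀ) * Aᵀ := by simp only [Matrix.mul_assoc]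
    _ = etaM := by rw [hN, hA]

lemma pow_mem_O12 (hA : A ∈ O12) (k : ℕ) : A ^ k ∈ O12 := by
  induction k with
  | zero => exact one_mem_O12
  | succ k ih => rw [pow_succ]; exact mul_mem_O12 ih hA

lemma mul_etaM_transpose_etaM (hA : A ∈ O12) : A * (etaM * Aᵀ * etaM) = 1 := by
  rw [← Matrix.mul_assoc, ← Matrix.mul_assoc, hA, etaM_mul_self]

lemma transpose_mem_O12 (hA : A ∈ O12) : Aᵀ ∈ O12 := by
  change Aᵀ * etaM * Aᵀᵀ = etaM
  calc Aᵀ * etaM * Aᵀᵀ = etaM * ((etaM * Aᵀ * etaM) * A) := by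
        simp only [Matrix.transpose_transpose, ← Matrix.mul_assoc, etaM_mul_self, one_mul]
    _ = etaM := by rw [mul_eq_one_comm.mp (mul_etaM_transpose_etaM hA), mul_one]

lemma transpose_etaM : etaMᵀ = etaM := by
  ext i j; fin_cases i <;> fin_cases j <;> rfl

lemma inv_eq_of_mem_O12 (hA : A ∈ O12) : A⁻¹ = etaM * Aᵀ * etaM :=
  inv_eq_right_inv (mul_etaM_transpose_etaM hA)

lemma inv_mem_O12 (hA : A ∈ O12) : A⁻¹ ∈ O12 := by
  have hAT : Aᵀ * etaM * A = etaM := by simpa [O12] using transpose_mem_O12 hA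
  change A⁻¹ * etaM * A⁻¹ᵀ = etaM
  rw [inv_eq_of_mem_O12 hA]
  simp only [transpose_mul, transpose_transpose, transpose_etaM]
  calc etaM * Aᵀ * etaM * etaM * (etaM * (A * etaM))
      = etaM * (Aᵀ * (etaM * etaM) * etaM * A) * etaM := by simp only [Matrix.mul_assoc]
    _ = etaM := by rw [etaM_mul_self, Matrix.mul_one, hAT, etaM_mul_self, Matrix.one_mul]

lemma Qf_mulVec (hL : Lᵀ ∈ O12) (x : Fin 3 → ℝ) : Qf (L *ᵥ x) = Qf x := by
  have hL' : Lᵀ * etaM * L = etaM := by simpa [O12] using hL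
  simp only [Qf, mink_eq_dotProduct]
  rw [dotProduct_comm, dotProduct_mulVec, ← mulVec_transpose, dotProduct_comm,
    mulVec_mulVec, mulVec_mulVec, hL']


lemma B1_mem_O12 (t : ℝ) : B1 t ∈ O12 := by
  have h := cosh_sq_sub_sinh_sq t
  ext i j
  fin_cases i <;> fin_cases j <;>
    simp [B1, etaM, Matrix.mul_apply, Fin.sum_univ_three] <;> linarith

lemma B2_mem_O12 (s : ℝ) : B2 s ∈ O12 := by
  have h := cosh_sq_sub_sinh_sq s
  ext i j
  fin_cases i <;> fin_cases j <;>
    simp [B2, etaM, Matrix.mul_apply, Fin.sum_univ_three] <;> linarith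

lemma Pm_mem_O12 : Pm ∈ O12 := by
  ext i j; fin_cases i <;> fin_cases j <;> simp [Pm, etaM, Matrix.mul_apply, Fin.sum_univ_three]

lemma det_B1 (t : ℝ) : (B1 t).det = 1 := by
  simp [B1, Matrix.det_fin_three]
  linarith [cosh_sq_sub_sinh_sq t]

lemma det_B2 (s : ℝ) : (B2 s).det = 1 := by
  simp [B2, Matrix.det_fin_three]
  linarith [cosh_sq_sub_sinh_sq s]

lemma det_Pm : Pm.det = 1 := by
  simp [Pm, Matrix.det_fin_three]

lemma B2_mul_Pm_pow_mul_B1_mem_O12 (s t : ℝ) (k : ℕ) : B2 s * Pm ^ k * B1 t ∈ O12 :=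
  mul_mem_O12 (mul_mem_O12 (B2_mem_O12 s) (pow_mem_O12 Pm_mem_O12 k)) (B1_mem_O12 t)

lemma det_B2_mul_Pm_pow_mul_B1 (s t : ℝ) (k : ℕ) : (B2 s * Pm ^ k * B1 t).det = 1 := by
  simp [det_B1, det_B2, det_Pm]

lemma mulVec_null_apply (L : Matrix (Fin 3) (Fin 3) ℝ) (i : Fin 3) :
    (L *ᵥ ![1, 0, -1]) i = L i 0 - L i 2 := by
  simp [Matrix.mulVec, dotProduct, Fin.sum_univ_three, sub_eq_add_neg]

lemma Dm_mulVec_null (q : ℝ) : Dm q *ᵥ ![1, 0, -1] = ![1, 0, -1] := by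
  ext i; fin_cases i <;> simp [mulVec_null_apply, Dm]; ring

lemma B2_mul_Pm_pow_mul_B1_mulVec_null (s t : ℝ) (k : ℕ) :
    (B2 s * Pm ^ k * B1 t) *ᵥ ![1, 0, -1] =
      ![exp (-t) * cosh s, exp (-t) * sinh s, -((-1) ^ k * exp (-t))] := by
  have hPm : ∀ x z : ℝ, Pm ^ k *ᵥ ![x, 0, z] = ![x, 0, (-1) ^ k * z] := by
    intro x z
    induction k with
    | zero => ext i; fin_cases i <;> simp
    | succ k ih =>
      rw [pow_succ', ← mulVec_mulVec, ih]
      ext i; fin_cases i <;> simp [Pm, Matrix.mulVec, dotProduct, Fin.sum_univ_three, pow_succ']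
  have hB1 : B1 t *ᵥ ![1, 0, -1] = ![exp (-t), 0, -exp (-t)] := by
    ext i; fin_cases i <;> simp [mulVec_null_apply, B1]
  rw [← mulVec_mulVec, ← mulVec_mulVec, hB1, hPm]
  ext i; fin_cases i <;> simp [B2, Matrix.mulVec, dotProduct, Fin.sum_univ_three] <;> ring


lemma mulVec_null_zero_pos (hL : L ∈ O12) (h00 : 0 < L 0 0) : 0 < (L *ᵥ ![1, 0, -1]) 0 := by
  have h := mink_rows_of_mem_O12 hL 0 0
  simp only [mink, etaM, of_apply, cons_val', cons_val_zero, empty_val', cons_val_fin_one] at h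
  rw [mulVec_null_apply]
  nlinarith [sq_nonneg (L 0 1)]

lemma eq_Dm_of_mulVec_null (hN : N ∈ O12) (hdet : N.det = 1)
    (hfix : N *ᵥ ![1, 0, -1] = ![1, 0, -1]) : N = Dm (N 0 1) := by
  have E : ∀ i j, N i 0 * N j 0 - N i 1 * N j 1 - N i 2 * N j 2 = etaM i j :=
    mink_rows_of_mem_O12 hN
  have F : ∀ i, N i 0 - N i 2 = ![1, 0, -1] i := fun i => by rw [← mulVec_null_apply, hfix]
  have E00 := E 0 0; have E01 := E 0 1; have E02 := E 0 2; have E22 := E 2 2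
  have F0 := F 0; have F1 := F 1; have F2 := F 2
  simp only [etaM, of_apply, cons_val', cons_val_zero, cons_val_fin_one, cons_val_one, cons_val,
    Fin.isValue, Nat.succ_eq_add_one, Nat.reduceAdd] at E00 E01 E02 E22 F0 F1 F2
  rw [Matrix.det_fin_three] at hdet
  generalize hb : N 0 1 = b at E00 E01 E02 hdet ⊢
  have h02 : N 0 2 = b ^ 2 / 2 := by
    linear_combination (1 / 2 : ℝ) * E00 - (1 / 2 : ℝ) * (N 0 0 + N 0 2 + 1) * F0
  have h00 : N 0 0 = 1 + b ^ 2 / 2 := by linarith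
  have h10 : N 1 0 = b * N 1 1 := by linear_combination E01 - N 1 0 * F0 - N 0 2 * F1
  have h12 : N 1 2 = b * N 1 1 := by linarith
  have h20 : N 2 0 = N 2 2 - 1 := by linarith
  rw [h20] at E02 E22
  have h22 : N 2 2 = 1 - N 2 1 ^ 2 / 2 := by linear_combination (-1 / 2 : ℝ) * E22
  rw [h00, h02, h22] at E02
  have h21 : N 2 1 = -b := by
    have : (b + N 2 1) ^ 2 = 0 := by linear_combination (-2 : ℝ) * E02
    linarith [pow_eq_zero_iff two_ne_zero |>.mp this]
  rw [h21] at h22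
  rw [h00, h02, h10, h12, h20, h21, h22] at hdet
  -- `det N = 1` is what excludes `N 1 1 = -1`: `diag(1,−1,1)` also fixes `n`.
  have h11 : N 1 1 = 1 := by linear_combination hdet
  ext i j
  fin_cases i <;> fin_cases j <;> simp [Dm, hb, h00, h02, h10, h12, h20, h21, h22, h11]

lemma exists_eq_mul_Dm_of_mulVec_null_eq (hA : A ∈ O12) (hAdet : A.det = 1) (hL : L ∈ O12)
    (hLdet : L.det = 1) (h : A *ᵥ ![1, 0, -1] = L *ᵥ ![1, 0, -1]) : ∃ q, L = A * Dm q := by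
  have hAu : IsUnit A.det := by simp [hAdet]
  have hAL : A * (A⁻¹ * L) = L := mul_nonsing_inv_cancel_left A L hAu
  refine ⟨(A⁻¹ * L) 0 1, ?_⟩
  nth_rw 1 [← hAL]
  congr 1
  apply eq_Dm_of_mulVec_null (mul_mem_O12 (inv_mem_O12 hA) hL)
  · rw [det_mul, det_nonsing_inv, hAdet, hLdet]; norm_num
  · rw [← mulVec_mulVec, ← h, mulVec_mulVec, nonsing_inv_mul A hAu, one_mulVec]

lemma exists_B2_mul_Pm_pow_mul_B1_mulVec_null_eq {v : Fin 3 → ℝ} (hv0 : 0 < v 0)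
    (hv : Qf v = 0) (hv2 : v 2 ≠ 0) :
    ∃ (s t : ℝ) (k : Fin 2), (B2 s * Pm ^ (k : ℕ) * B1 t) *ᵥ ![1, 0, -1] = v := by
  obtain ⟨k, hk⟩ : ∃ k : Fin 2, -((-1) ^ (k : ℕ) * |v 2|) = v 2 := by
    rcases hv2.lt_or_gt with h | h
    · exact ⟨0, by simp [abs_of_neg h]⟩
    · exact ⟨1, by simp [abs_of_pos h]⟩
  have hr : 0 < |v 2| := abs_pos.mpr hv2
  have hcosh : √(1 + (v 1 / |v 2|) ^ 2) = v 0 / |v 2| := by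
    rw [← sqrt_sq (div_pos hv0 hr).le]
    congr 1
    field_simp
    simp only [Qf, mink, sq_abs] at hv ⊢
    linarith
  refine ⟨arsinh (v 1 / |v 2|), -log |v 2|, k, ?_⟩
  rw [B2_mul_Pm_pow_mul_B1_mulVec_null, neg_neg, exp_log hr, sinh_arsinh, cosh_arsinh, hcosh]
  ext i; fin_cases i <;> simp [mul_div_cancel₀ _ hr.ne', hk]

lemma B2_mul_Pm_pow_mul_B1_mulVec_null_injective {s t s' t' : ℝ} {k k' : Fin 2}
    (h : (B2 s * Pm ^ (k : ℕ) * B1 t) *ᵥ ![1, 0, -1] =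
      (B2 s' * Pm ^ (k' : ℕ) * B1 t') *ᵥ ![1, 0, -1]) :
    s = s' ∧ t = t' ∧ k = k' := by
  simp only [B2_mul_Pm_pow_mul_B1_mulVec_null] at h
  have h1 := congrFun h 1
  have h2 := congrFun h 2
  simp only [cons_val_one, cons_val_zero, cons_val, neg_inj, Fin.isValue, Nat.succ_eq_add_one,
    Nat.reduceAdd] at h1 h2
  obtain rfl : k = k' := by
    fin_cases k <;> fin_cases k' <;> simp at h2 ⊢ <;> linarith [exp_pos (-t), exp_pos (-t')]
  obtain rfl : t = t' := by simpa using exp_injective (mul_left_cancel₀ (by simp) h2)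
  exact ⟨sinh_injective (mul_left_cancel₀ (exp_pos _).ne' h1), rfl, rfl⟩

lemma B2_mul_Pm_pow_mul_B1_mul_Dm_injective {s t q s' t' q' : ℝ} {k k' : Fin 2}
    (h : B2 s * Pm ^ (k : ℕ) * B1 t * Dm q = B2 s' * Pm ^ (k' : ℕ) * B1 t' * Dm q') :
    (s, t, q, k) = (s', t', q', k') := by
  have himg : (B2 s * Pm ^ (k : ℕ) * B1 t) *ᵥ ![1, 0, -1] =
      (B2 s' * Pm ^ (k' : ℕ) * B1 t') *ᵥ ![1, 0, -1] := by
    nth_rw 1 [← Dm_mulVec_null q]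
    rw [mulVec_mulVec, h, ← mulVec_mulVec, Dm_mulVec_null]
  obtain ⟨rfl, rfl, rfl⟩ := B2_mul_Pm_pow_mul_B1_mulVec_null_injective himg
  have hunit : IsUnit (B2 s * Pm ^ (k : ℕ) * B1 t) := by
    rw [isUnit_iff_isUnit_det, det_B2_mul_Pm_pow_mul_B1]; exact isUnit_one
  have hD : Dm q = Dm q' := hunit.mul_left_cancel h
  have hq : q = q' := by simpa [Dm] using congrFun₂ hD 0 1
  rw [hq]

end Lorentz

/-- Hannabuss–Takahashi decomposition: if `Λ ∈ SO₀(1,2)` and the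
`x₂`-component of `Λ(1,0,−1)` is nonzero, then there are unique `s, t, q ∈ ℝ` and
`k ∈ {0,1}` with `Λ = Λ₂(s) Pᵏ Λ₁(t) D(q)`. -/
theorem hannabuss_decomposition (L : Matrix (Fin 3) (Fin 3) ℝ) (hL : L ∈ SO012)
    (h2 : (L.mulVec ![1, 0, -1]) 2 ≠ 0) :
    ∃! p : ℝ × ℝ × ℝ × Fin 2,
      L = B2 p.1 * Pm ^ (p.2.2.2 : ℕ) * B1 p.2.1 * Dm p.2.2.1 := by
  obtain ⟨hO, hdet, h00⟩ := hL
  have hnull : Qf (L *ᵥ ![1, 0, -1]) = 0 := by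
    rw [Qf_mulVec (transpose_mem_O12 hO)]; simp [Qf, mink]
  obtain ⟨s, t, k, hst⟩ :=
    exists_B2_mul_Pm_pow_mul_B1_mulVec_null_eq (mulVec_null_zero_pos hO h00) hnull h2
  obtain ⟨q, hq⟩ := exists_eq_mul_Dm_of_mulVec_null_eq (B2_mul_Pm_pow_mul_B1_mem_O12 s t k)
    (det_B2_mul_Pm_pow_mul_B1 s t k) hO hdet hst
  refine ⟨(s, t, q, k), hq, fun p hp => ?_⟩
  exact B2_mul_Pm_pow_mul_B1_mul_Dm_injective (hp.symm.trans hq)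
end
end

section
/- (Intersection point of two light rays over the time-zero circle.) Fix r > 0 and angles 0 ≤ ψ₋ < ψ₊ < π. For λ, λ′ > 0, the equality of points R₀(ψ₋) (λ, −λ, r) = R₀(ψ₊) (λ′, λ′, r) holds if and only if λ = λ′ = r · tan((ψ₊ − ψ₋)/2). In particular the two light rays λ ↦ R₀(ψ₋)((0,0,r) + λ(1,−1,0)) and λ′ ↦ R₀(ψ₊)((0,0,r) + λ′(1,1,0)) intersect at exactly one point, at parameter value r tan((ψ₊ − ψ₋)/2). -/
open Matrix

noncomputable section

lemma R0_mul' (a b : ℝ) : R0 a * R0 b = R0 (a + b) := by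
  ext i j
  fin_cases i <;> fin_cases j <;>
    simp [R0, Matrix.mul_apply, Fin.sum_univ_three, Real.cos_add, Real.sin_add,
      Matrix.vecHead, Matrix.vecTail] <;> ring

lemma R0_zero' : R0 0 = 1 := by
  ext i j
  fin_cases i <;> fin_cases j <;>
    simp [R0, Matrix.one_apply, Matrix.vecHead, Matrix.vecTail]

lemma R0_mulVec_inj' (a : ℝ) (v w : Fin 3 → ℝ) :
    (R0 a).mulVec v = (R0 a).mulVec w ↔ v = w := by
  constructor
  · intro h
    have := congrArg ((R0 (-a)).mulVec) h
    simpa [Matrix.mulVec_mulVec, R0_mul', R0_zero'] using this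
  · intro h; rw [h]

lemma lightRays_core (r : ℝ) (hr : 0 < r) (θ : ℝ) (hθ0 : 0 < θ) (hθπ : θ < Real.pi)
    (l l' : ℝ) :
    ((![l, -l, r] : Fin 3 → ℝ) = (R0 θ).mulVec ![l', l', r]) ↔
      (l = r * Real.tan (θ / 2) ∧ l' = r * Real.tan (θ / 2)) := by
  set s := Real.sin (θ / 2) with hsdef
  set c := Real.cos (θ / 2) with hcdef
  have hs : 0 < s := Real.sin_pos_of_pos_of_lt_pi (by linarith) (by linarith [Real.pi_pos])
  have hc : 0 < c := Real.cos_pos_of_mem_Ioo ⟨by linarith [Real.pi_pos], by linarith⟩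
  have pyth : s ^ 2 + c ^ 2 = 1 := by
    rw [hsdef, hcdef]; exact Real.sin_sq_add_cos_sq _
  have hsin : Real.sin θ = 2 * s * c := by
    rw [hsdef, hcdef, ← Real.sin_two_mul]; ring_nf
  have hcos : Real.cos θ = 2 * c ^ 2 - 1 := by
    rw [hcdef, ← Real.cos_two_mul]; ring_nf
  have htan : Real.tan (θ / 2) = s / c := Real.tan_eq_sin_div_cos _
  constructor
  · intro h
    have h0 := congrFun h 0
    have h1 := congrFun h 1
    have h2 := congrFun h 2
    simp [R0, Matrix.mulVec, dotProduct, Fin.sum_univ_three, hsin, hcos] at h0 h1 h2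
    have key : s * (l' * c - r * s) = 0 := by
      linear_combination (-1/2) * h2 + (-r) * pyth
    have hb : l' * c = r * s := by
      rcases mul_eq_zero.mp key with h | h
      · exact absurd h hs.ne'
      · linarith
    have hl' : l' = r * Real.tan (θ / 2) := by
      rw [htan]; field_simp; linarith [hb]
    refine ⟨?_, hl'⟩
    have hlc : l * c = r * s := by
      have : -l * c = l' * c * (2 * c ^ 2 - 1) - r * (2 * s * c) * c := by
        linear_combination c * h1
      rw [hb] at this
      nlinarith [pyth]
    rw [htan]; field_simp; linarith [hlc]
  · rintro ⟨hl, hl'⟩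
    have hlc : l * c = r * s := by rw [hl, htan]; field_simp
    have hlc' : l' * c = r * s := by rw [hl', htan]; field_simp
    funext i
    fin_cases i <;>
      simp [R0, Matrix.mulVec, dotProduct, Fin.sum_univ_three, hsin, hcos] <;>
      [skip; nlinarith [pyth, hlc, hlc', hc, mul_pos hs hc]; nlinarith [pyth, hlc, hlc', hc]]
    · nlinarith [hlc, hlc', hc]

/-- intersection of two light rays over the time-zero circle: for
`0 ≤ ψ₋ < ψ₊ < π` and `λ, λ′ > 0`, `R₀(ψ₋)(λ,−λ,r) = R₀(ψ₊)(λ′,λ′,r)` iff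
`λ = λ′ = r tan((ψ₊−ψ₋)/2)`; in particular the two light rays intersect in exactly one
point. -/
theorem lightRays_intersection (r : ℝ) (hr : 0 < r) (ψm ψp : ℝ)
    (h0 : 0 ≤ ψm) (h1 : ψm < ψp) (h2 : ψp < Real.pi) :
    (∀ l l' : ℝ, 0 < l → 0 < l' →
      ((R0 ψm).mulVec ![l, -l, r] = (R0 ψp).mulVec ![l', l', r] ↔
        l = r * Real.tan ((ψp - ψm) / 2) ∧ l' = r * Real.tan ((ψp - ψm) / 2))) ∧
    (∃! z : Fin 3 → ℝ,
      (∃ a : ℝ, 0 < a ∧ z = (R0 ψm).mulVec ![a, -a, r]) ∧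
      (∃ b : ℝ, 0 < b ∧ z = (R0 ψp).mulVec ![b, b, r])) := by
  have hθ0 : 0 < ψp - ψm := by linarith
  have hθπ : ψp - ψm < Real.pi := by linarith
  have hR : R0 ψp = R0 ψm * R0 (ψp - ψm) := by rw [R0_mul']; ring_nf
  have main : ∀ l l' : ℝ,
      ((R0 ψm).mulVec ![l, -l, r] = (R0 ψp).mulVec ![l', l', r] ↔
        l = r * Real.tan ((ψp - ψm) / 2) ∧ l' = r * Real.tan ((ψp - ψm) / 2)) := by
    intro l l'
    rw [hR, ← Matrix.mulVec_mulVec, R0_mulVec_inj']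
    exact lightRays_core r hr _ hθ0 hθπ l l'
  refine ⟨fun l l' _ _ => main l l', ?_⟩
  set t := r * Real.tan ((ψp - ψm) / 2) with htdef
  have ht : 0 < t := by
    apply mul_pos hr
    apply Real.tan_pos_of_pos_of_lt_pi_div_two
    · linarith
    · linarith [Real.pi_pos]
  refine ⟨(R0 ψm).mulVec ![t, -t, r], ⟨⟨t, ht, rfl⟩, ⟨t, ht, ?_⟩⟩, ?_⟩
  · exact (main t t).mpr ⟨rfl, rfl⟩
  · rintro z ⟨⟨a, ha, haz⟩, ⟨b, hb, hbz⟩⟩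
    have heq : (R0 ψm).mulVec ![a, -a, r] = (R0 ψp).mulVec ![b, b, r] := by
      rw [← haz, ← hbz]
    obtain ⟨ha', _⟩ := (main a b).mp heq
    rw [haz, ha']
end
end

section
/- (Finite speed of light on de Sitter space.) Fix r > 0, ψ ∈ (−π/2, π/2) and τ > 0, and let x = (0, r sin ψ, r cos ψ). Set c = arcsin( sin ψ / √(1 + sinh²τ · cos²ψ) ) and d = arctan( sinh τ · cos ψ ). Then the intersection of the causal past of the boosted point Λ₁(τ) x with the time-zero circle is the closed arc Γ⁻(Λ₁(τ) x) ∩ S¹ = { (0, r sin φ, r cos φ) : c − d ≤ φ ≤ c + d }. In particular this intersection is an arc of angular length 2·arctan(sinh τ · cos ψ) centred at the angle c. -/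
open Matrix

noncomputable section

lemma B1_mulVec (t a b : ℝ) :
    (B1 t).mulVec ![0, a, b] = ![Real.sinh t * b, a, Real.cosh t * b] := by
  funext i
  fin_cases i <;>
    simp [B1, Matrix.mulVec, dotProduct, Fin.sum_univ_three]

lemma Qf_diff (r τ ψ φ : ℝ) :
    Qf ((B1 τ).mulVec ![0, r * Real.sin ψ, r * Real.cos ψ] - ![0, r * Real.sin φ, r * Real.cos φ]) =
    2 * r ^ 2 * (Real.sin ψ * Real.sin φ + Real.cosh τ * Real.cos ψ * Real.cos φ - 1) := by
  rw [B1_mulVec]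
  simp only [Qf, mink, Pi.sub_apply, Matrix.cons_val_zero, Matrix.cons_val_one,
    Matrix.head_cons, Matrix.cons_val_two, Matrix.tail_cons]
  have h1 := Real.sin_sq_add_cos_sq ψ
  have h2 := Real.sin_sq_add_cos_sq φ
  have h3 := Real.cosh_sq τ
  linear_combination (-(r^2))*h1 + (-(r^2))*h2 + (-(r^2)*Real.cos ψ^2)*h3

lemma Qf_circ (r φ : ℝ) : Qf ![0, r * Real.sin φ, r * Real.cos φ] = -r ^ 2 := by
  simp only [Qf, mink, Matrix.cons_val_zero, Matrix.cons_val_one, Matrix.head_cons,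
    Matrix.cons_val_two, Matrix.tail_cons]
  linear_combination (-(r^2))*(Real.sin_sq_add_cos_sq φ)

/-- Reduce an angle mod 2π into the closed arc `[c-d, c+d]`. -/
lemma reduce_arc (c d φ : ℝ) (hd0 : 0 ≤ d) (hdpi : d ≤ Real.pi)
    (h : Real.cos d ≤ Real.cos (φ - c)) :
    ∃ φ', c - d ≤ φ' ∧ φ' ≤ c + d ∧ Real.sin φ' = Real.sin φ ∧ Real.cos φ' = Real.cos φ := by
  have hpi := Real.pi_pos
  set θ := φ - c with hθ
  set k : ℤ := ⌊(θ + Real.pi) / (2 * Real.pi)⌋ with hk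
  set θ' := θ - 2 * Real.pi * k with hθ'
  have hkle : (k : ℝ) ≤ (θ + Real.pi) / (2 * Real.pi) := Int.floor_le _
  have hklt : (θ + Real.pi) / (2 * Real.pi) < k + 1 := Int.lt_floor_add_one _
  rw [le_div_iff₀ (by linarith : (0:ℝ) < 2 * Real.pi)] at hkle
  rw [div_lt_iff₀ (by linarith : (0:ℝ) < 2 * Real.pi)] at hklt
  have hθ'lb : -Real.pi ≤ θ' := by rw [hθ']; linarith
  have hθ'ub : θ' < Real.pi := by rw [hθ']; linarith
  have hshift : θ' = θ + (-k : ℤ) * (2 * Real.pi) := by push_cast; ring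
  have hcosθ' : Real.cos θ' = Real.cos θ := by rw [hshift, Real.cos_add_int_mul_two_pi]
  have habs : |θ'| ≤ d := by
    rw [abs_le]
    constructor
    · by_contra hcon
      push_neg at hcon
      have : Real.cos (-θ') < Real.cos d :=
        Real.cos_lt_cos_of_nonneg_of_le_pi hd0 (by linarith) (by linarith)
      rw [Real.cos_neg, hcosθ'] at this
      linarith
    · by_contra hcon
      push_neg at hcon
      have : Real.cos θ' < Real.cos d :=
        Real.cos_lt_cos_of_nonneg_of_le_pi hd0 (by linarith) hcon
      rw [hcosθ'] at this
      linarith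
  rw [abs_le] at habs
  refine ⟨c + θ', by linarith, by linarith, ?_, ?_⟩
  · rw [show c + θ' = φ + (-k : ℤ) * (2 * Real.pi) by rw [hθ', hθ]; push_cast; ring,
      Real.sin_add_int_mul_two_pi]
  · rw [show c + θ' = φ + (-k : ℤ) * (2 * Real.pi) by rw [hθ', hθ]; push_cast; ring,
      Real.cos_add_int_mul_two_pi]

set_option maxHeartbeats 1000000 in
/-- finite speed of light on de Sitter space: the intersection of the
causal past of `Λ₁(τ)x`, for `x = (0, r sin ψ, r cos ψ)`, with the time-zero circle is
the closed arc of angular radius `d = arctan(sinh τ cos ψ)` centred at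
`c = arcsin(sin ψ / √(1 + sinh²τ cos²ψ))`. -/
theorem finite_speed_of_light (r : ℝ) (hr : 0 < r) (ψ : ℝ)
    (hψ1 : -(Real.pi / 2) < ψ) (hψ2 : ψ < Real.pi / 2) (τ : ℝ) (hτ : 0 < τ) :
    {z : Fin 3 → ℝ | Qf z = -r ^ 2 ∧
        0 ≤ Qf ((B1 τ).mulVec ![0, r * Real.sin ψ, r * Real.cos ψ] - z) ∧
        0 ≤ ((B1 τ).mulVec ![0, r * Real.sin ψ, r * Real.cos ψ] - z) 0} ∩
      {z | ∃ φ : ℝ, z = ![0, r * Real.sin φ, r * Real.cos φ]} =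
    {z | ∃ φ : ℝ,
        Real.arcsin (Real.sin ψ / Real.sqrt (1 + Real.sinh τ ^ 2 * Real.cos ψ ^ 2)) -
            Real.arctan (Real.sinh τ * Real.cos ψ) ≤ φ ∧
        φ ≤ Real.arcsin (Real.sin ψ / Real.sqrt (1 + Real.sinh τ ^ 2 * Real.cos ψ ^ 2)) +
            Real.arctan (Real.sinh τ * Real.cos ψ) ∧
        z = ![0, r * Real.sin φ, r * Real.cos φ]} := by
  have hs0 : 0 < Real.sinh τ := by rwa [Real.sinh_pos_iff]
  have hcψ : 0 < Real.cos ψ := Real.cos_pos_of_mem_Ioo ⟨hψ1, hψ2⟩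
  have hch : 0 < Real.cosh τ := Real.cosh_pos τ
  have hpi := Real.pi_pos
  set S := Real.sqrt (1 + Real.sinh τ ^ 2 * Real.cos ψ ^ 2) with hSdef
  have hS2 : S ^ 2 = 1 + Real.sinh τ ^ 2 * Real.cos ψ ^ 2 := Real.sq_sqrt (by positivity)
  have hS1 : 1 ≤ S := Real.one_le_sqrt.mpr (by nlinarith)
  have hS0 : 0 < S := lt_of_lt_of_le one_pos hS1
  set c := Real.arcsin (Real.sin ψ / S) with hc
  set d := Real.arctan (Real.sinh τ * Real.cos ψ) with hd
  have hB2 : (Real.cosh τ * Real.cos ψ) ^ 2 = S ^ 2 - Real.sin ψ ^ 2 := by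
    rw [hS2]
    have h1 := Real.sin_sq_add_cos_sq ψ
    have h3 := Real.cosh_sq τ
    nlinarith
  have hB0 : 0 < Real.cosh τ * Real.cos ψ := by positivity
  have hsinc : Real.sin c = Real.sin ψ / S := by
    rw [hc]
    apply Real.sin_arcsin
    · rw [le_div_iff₀ hS0]
      nlinarith [Real.neg_one_le_sin ψ]
    · rw [div_le_one hS0]
      nlinarith [Real.sin_le_one ψ]
  have hcosc : Real.cos c = Real.cosh τ * Real.cos ψ / S := by
    rw [hc, Real.cos_arcsin]
    rw [show 1 - (Real.sin ψ / S) ^ 2 = (Real.cosh τ * Real.cos ψ / S) ^ 2 by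
      field_simp; nlinarith]
    exact Real.sqrt_sq (by positivity)
  have hcosd : Real.cos d = 1 / S := by
    rw [hd, Real.cos_arctan,
      show 1 + (Real.sinh τ * Real.cos ψ) ^ 2 = 1 + Real.sinh τ ^ 2 * Real.cos ψ ^ 2 by ring,
      ← hSdef]
  have hd0 : 0 ≤ d := by
    rw [hd, ← Real.arctan_zero]
    exact Real.arctan_strictMono.monotone (by positivity)
  have hd2 : d < Real.pi / 2 := Real.arctan_lt_pi_div_two _
  have key : ∀ φ : ℝ, Real.sin ψ * Real.sin φ + Real.cosh τ * Real.cos ψ * Real.cos φ =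
      S * Real.cos (φ - c) := by
    intro φ
    rw [Real.cos_sub, hsinc, hcosc]
    field_simp
    ring
  have keyiff : ∀ φ : ℝ,
      (1 ≤ Real.sin ψ * Real.sin φ + Real.cosh τ * Real.cos ψ * Real.cos φ) ↔
        Real.cos d ≤ Real.cos (φ - c) := by
    intro φ
    rw [key φ, hcosd, div_le_iff₀ hS0, mul_comm]
  clear_value S c d
  ext z
  simp only [Set.mem_inter_iff, Set.mem_setOf_eq]
  constructor
  · rintro ⟨⟨hQz, hQ, h0⟩, φ, rfl⟩
    rw [Qf_diff] at hQ
    have hr2 : 0 < r ^ 2 := by positivity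
    have hcond : 1 ≤ Real.sin ψ * Real.sin φ + Real.cosh τ * Real.cos ψ * Real.cos φ := by
      nlinarith
    have hcos : Real.cos d ≤ Real.cos (φ - c) := (keyiff φ).mp hcond
    obtain ⟨φ', hl, hu, hsin, hcosφ⟩ :=
      reduce_arc c d φ hd0 (by linarith) hcos
    exact ⟨φ', hl, hu, by rw [hsin, hcosφ]⟩
  · rintro ⟨φ, h1, h2, rfl⟩
    refine ⟨⟨Qf_circ r φ, ?_, ?_⟩, φ, rfl⟩
    · rw [Qf_diff]
      have habs : |φ - c| ≤ d := abs_le.mpr ⟨by linarith, by linarith⟩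
      have hcos : Real.cos d ≤ Real.cos (φ - c) := by
        rw [← Real.cos_abs (φ - c)]
        exact Real.cos_le_cos_of_nonneg_of_le_pi (abs_nonneg _) (by linarith) habs
      have := (keyiff φ).mpr hcos
      nlinarith
    · rw [B1_mulVec]
      simp only [Pi.sub_apply, Matrix.cons_val_zero]
      have : 0 ≤ Real.sinh τ * (r * Real.cos ψ) := by positivity
      linarith
end
end

section
/- (Gamma-function form of the Fourier coefficients of the Legendre kernel.) For every s ∈ ℂ that is not an integer and every natural number k, the following Gamma-function identity holds: (−1)ᵏ · (π / 4ᵏ) · Γ(s + k + 1) / Γ(s − k + 1) · ( Γ((k − s + 1)/2) )⁻² · ( Γ((k + s)/2 + 1) )⁻² = − ( sin(π s) / π ) · (k + s)⁻¹ · Γ((k − s)/2) Γ((k + s + 1)/2) / ( Γ((k + s)/2) Γ((k − s + 1)/2) ). -/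
/-!
With `a = (k + s)/2` and `b = (k - s)/2` we have `a + b = k`. Legendre's duplication formula,
applied to `a` and to `b`, turns `Γ(k + s) Γ(k - s)` into
`4ᵏ/(4π) · Γ(a) Γ(a + 1/2) Γ(b) Γ(b + 1/2)`, and Euler's reflection formula at `k - s` turns
`1/Γ(s - k + 1)` into `(-1)ᵏ⁺¹ sin(πs) Γ(k - s)/π`. What remains is field arithmetic.
-/

open Real

namespace Complex

theorem inv_Gamma_one_sub {z : ℂ} (hz : sin (π * z) ≠ 0) :
    (Gamma (1 - z))⁻¹ = Gamma z * sin (π * z) / π := by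
  have hrefl : Gamma z * Gamma (1 - z) * sin (π * z) = π := by
    rw [Gamma_mul_Gamma_one_sub, div_mul_cancel₀ _ hz]
  have hΓ : Gamma (1 - z) ≠ 0 := by
    rintro h
    rw [h, mul_zero, zero_mul] at hrefl
    exact ofReal_ne_zero.mpr pi_ne_zero hrefl.symm
  rw [eq_div_iff (ofReal_ne_zero.mpr pi_ne_zero)]
  linear_combination
    (Gamma (1 - z))⁻¹ * (-hrefl) + Gamma z * sin (π * z) * inv_mul_cancel₀ hΓ

theorem sin_pi_mul_nat_sub (n : ℕ) (z : ℂ) :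
    sin (π * (n - z)) = -((-1) ^ n * sin (π * z)) := by
  have h := sin_antiperiodic.nat_mul_sub_eq (x := π * z) n
  rwa [sin_neg, mul_neg, mul_comm (n : ℂ), ← mul_sub] at h

theorem Gamma_mul_Gamma_add_half_mul_of_add_eq_natCast {a b : ℂ} {n : ℕ} (hab : a + b = n) :
    Gamma a * Gamma (a + 1 / 2) * (Gamma b * Gamma (b + 1 / 2)) * 4 ^ n =
      Gamma (2 * a) * Gamma (2 * b) * (4 * π) := by
  have hpow : (2 : ℂ) ^ (1 - 2 * a) * (2 : ℂ) ^ (1 - 2 * b) * 4 ^ n = 4 := by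
    have hexp : 1 - 2 * a + (1 - 2 * b) = ((2 : ℕ) : ℂ) - ((2 * n : ℕ) : ℂ) := by
      push_cast; linear_combination -2 * hab
    rw [← cpow_add _ _ two_ne_zero, hexp, cpow_sub _ _ two_ne_zero, cpow_natCast, cpow_natCast,
      pow_mul]
    norm_num
  have hsqrt : ((√π : ℝ) : ℂ) * (√π : ℝ) = π := by
    rw [← ofReal_mul, mul_self_sqrt pi_pos.le]
  rw [Gamma_mul_Gamma_add_half, Gamma_mul_Gamma_add_half]
  linear_combination Gamma (2 * a) * Gamma (2 * b) *
    ((2 : ℂ) ^ (1 - 2 * a) * (2 : ℂ) ^ (1 - 2 * b) * 4 ^ n * hsqrt + π * hpow)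

end Complex

open Complex

/-- Gamma-function form of the Fourier coefficients of the Legendre
kernel: for `s ∈ ℂ \ ℤ` and `k ∈ ℕ`,
`(−1)ᵏ (π/4ᵏ) Γ(s+k+1)/Γ(s−k+1) · Γ((k−s+1)/2)⁻² · Γ((k+s)/2+1)⁻²
  = −(sin(πs)/π) (k+s)⁻¹ Γ((k−s)/2)Γ((k+s+1)/2) / (Γ((k+s)/2)Γ((k−s+1)/2))`. -/
theorem legendre_fourier_gamma (s : ℂ) (hs : ∀ n : ℤ, s ≠ (n : ℂ)) (k : ℕ) :
    (-1 : ℂ) ^ k * ((Real.pi : ℂ) / 4 ^ k) *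
        Complex.Gamma (s + (k : ℂ) + 1) / Complex.Gamma (s - (k : ℂ) + 1) *
        (Complex.Gamma (((k : ℂ) - s + 1) / 2))⁻¹ ^ 2 *
        (Complex.Gamma (((k : ℂ) + s) / 2 + 1))⁻¹ ^ 2 =
      -(Complex.sin ((Real.pi : ℂ) * s) / (Real.pi : ℂ)) * ((k : ℂ) + s)⁻¹ *
        (Complex.Gamma (((k : ℂ) - s) / 2) * Complex.Gamma (((k : ℂ) + s + 1) / 2)) /
        (Complex.Gamma (((k : ℂ) + s) / 2) * Complex.Gamma (((k : ℂ) - s + 1) / 2)) := by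
  set a := ((k : ℂ) + s) / 2
  set b := ((k : ℂ) - s) / 2
  have hsin : sin (π * s) ≠ 0 := sin_ne_zero_iff.2 fun n h =>
    hs n (mul_left_cancel₀ (ofReal_ne_zero.2 pi_ne_zero) (by rw [h]; ring))
  have hks : (k : ℂ) + s ≠ 0 := fun h => hs (-k) (by push_cast; linear_combination h)
  have ha0 : a ≠ 0 := div_ne_zero hks two_ne_zero
  have hΓa : Gamma a ≠ 0 :=
    Gamma_ne_zero fun m h => hs (-k - 2 * m) (by push_cast; linear_combination 2 * h)
  have hΓb : Gamma (b + 1 / 2) ≠ 0 :=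
    Gamma_ne_zero fun m h => hs (k + 1 + 2 * m) (by push_cast; linear_combination -2 * h)
  have hrefl := inv_Gamma_one_sub (z := k - s) (by simpa [sin_pi_mul_nat_sub] using hsin)
  have hdup := Gamma_mul_Gamma_add_half_mul_of_add_eq_natCast (a := a) (b := b) (n := k) (by ring)
  rw [show ((k : ℂ) - s + 1) / 2 = b + 1 / 2 by ring,
    show ((k : ℂ) + s + 1) / 2 = a + 1 / 2 by ring,
    show s + k + 1 = 2 * a + 1 by ring, Gamma_add_one _ (mul_ne_zero two_ne_zero ha0),
    show s - k + 1 = 1 - (k - s) by ring, div_eq_mul_inv _ (Complex.Gamma (1 - _)), hrefl,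
    sin_pi_mul_nat_sub, show (k : ℂ) - s = 2 * b by ring, Gamma_add_one _ ha0,
    show (k : ℂ) + s = 2 * a by ring]
  have hsign : ((-1 : ℂ) ^ k) ^ 2 = 1 := by rw [← pow_mul, pow_mul', neg_one_sq, one_pow]
  -- otherwise `field_simp` rewrites `a + 1 / 2` to `(2 * a + 1) / 2` inside `Gamma`
  generalize Gamma (a + 1 / 2) = A at *
  generalize Gamma (b + 1 / 2) = B at *
  field_simp
  linear_combination hdup - 4 * π * Gamma (2 * a) * Gamma (2 * b) * hsign
end

section
/- (Flat-space limit of de Sitter plane waves.) Let m > 0 and t, q, p₁ ∈ ℝ. Set p = (√(p₁² + m²), p₁, −m) ∈ ℝ³, and for r > 0 let x_r = ( r sinh(t/r) + (q²/(2r)) e^{−t/r}, q, r cosh(t/r) − (q²/(2r)) e^{−t/r} ) (which equals Λ₁(t/r) D(q/r) (0,0,r)). Then: (i) Q(x_r) = −r² for every r > 0, i.e. x_r ∈ dS_r; (ii) η(x_r, p)/(m r) → 1 as r → ∞, and in particular η(x_r, p) > 0 for all sufficiently large r; (iii) the complex powers converge: ( η(x_r, p)/(m r) )^{−1/2 − i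 m r} → exp( −i ( t √(p₁² + m²) − q p₁ ) ) as r → ∞, where w ↦ w^c denotes the principal complex power. -/
open Matrix

noncomputable section

/-- The future-pointing lightlike vector `p = (√(p₁²+m²), p₁, −m)`. -/
def pvec (m p₁ : ℝ) : Fin 3 → ℝ := ![Real.sqrt (p₁ ^ 2 + m ^ 2), p₁, -m]

/-- The de Sitter point `x_r = Λ₁(t/r) D(q/r) (0,0,r)` in horospherical coordinates. -/
def xpt (t q r : ℝ) : Fin 3 → ℝ :=
  ![r * Real.sinh (t / r) + q ^ 2 / (2 * r) * Real.exp (-t / r), q,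
    r * Real.cosh (t / r) - q ^ 2 / (2 * r) * Real.exp (-t / r)]

/-! Expanding `sinh` and `cosh` to first order in `1/r` gives
`η(x_r, p) = m r + c + o(1)` with `c = t √(p₁² + m²) − q p₁`. So `w_r := η(x_r, p)/(m r)` satisfies
`m r (w_r − 1) → c`, hence `m r · log w_r → c` because `log w = (w − 1) + o(w − 1)` at `w = 1`,
and `w_r^{−1/2 − i m r} = exp((−1/2 − i m r) log w_r) → exp(−i c)`. -/

open Filter Topology

lemma xpt_eq_mulVec (t q : ℝ) {r : ℝ} (hr : r ≠ 0) :
    xpt t q r = (B1 (t / r) * Dm (q / r)).mulVec ![0, 0, r] := by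
  funext i
  fin_cases i <;>
    simp [xpt, B1, Dm, Matrix.mulVec, dotProduct, Matrix.mul_apply, Fin.sum_univ_three,
      Real.cosh_eq, Real.sinh_eq, neg_div, Real.exp_neg] <;>
    field_simp <;> ring

lemma Qf_xpt (t q : ℝ) {r : ℝ} (hr : r ≠ 0) : Qf (xpt t q r) = -r ^ 2 := by
  simp only [Qf, mink, xpt, Matrix.cons_val_zero, Matrix.cons_val_one, Matrix.cons_val_two,
    Matrix.head_cons, Matrix.tail_cons, Real.cosh_eq, Real.sinh_eq, neg_div, Real.exp_neg]
  field_simp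
  ring

lemma tendsto_mul_sub_comp_div_of_hasDerivAt {φ : ℝ → ℝ} {d : ℝ} (h : HasDerivAt φ d 0) (t : ℝ) :
    Tendsto (fun r : ℝ => r * (φ (t / r) - φ 0)) atTop (𝓝 (t * d)) := by
  rcases eq_or_ne t 0 with rfl | ht
  · simp
  have hdiv : Tendsto (fun r : ℝ => t / r) atTop (𝓝[≠] 0) :=
    tendsto_nhdsWithin_of_tendsto_nhds_of_eventually_within _
      (tendsto_const_nhds.div_atTop tendsto_id)
      (by filter_upwards [eventually_gt_atTop 0] with r hr using div_ne_zero ht hr.ne')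
  refine ((hasDerivAt_iff_tendsto_slope.mp h).comp hdiv |>.const_mul t).congr' ?_
  filter_upwards [eventually_gt_atTop 0] with r hr
  simp only [Function.comp, slope_def_field, sub_zero]
  field_simp

lemma Filter.Tendsto.mul_log_of_mul_sub_one {α : Type*} {l : Filter α} {g w : α → ℝ} {a : ℝ}
    (hw : Tendsto w l (𝓝 1)) (h : Tendsto (fun x => g x * (w x - 1)) l (𝓝 a)) :
    Tendsto (fun x => g x * Real.log (w x)) l (𝓝 a) := by
  have hlog : (fun x => Real.log (w x) - (w x - 1)) =o[l] fun x => w x - 1 := by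
    simpa [Function.comp_def] using
      (hasDerivAt_iff_isLittleO.mp (Real.hasDerivAt_log one_ne_zero)).comp_tendsto hw
  have herr : Tendsto (fun x => g x * (Real.log (w x) - (w x - 1))) l (𝓝 0) :=
    (Asymptotics.isLittleO_one_iff ℝ).mp
      (((Asymptotics.isBigO_refl g l).mul_isLittleO hlog).trans_isBigO (h.isBigO_one ℝ))
  simpa [mul_sub] using herr.add h

lemma Filter.Tendsto.ofReal_cpow_const_add_mul {α : Type*} {l : Filter α} {g w : α → ℝ} {a : ℝ}
    (hw : Tendsto w l (𝓝 1)) (h : Tendsto (fun x => g x * Real.log (w x)) l (𝓝 a)) (c b : ℂ) :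
    Tendsto (fun x => (w x : ℂ) ^ (c + b * g x)) l (𝓝 (Complex.exp (b * a))) := by
  have hlog : Tendsto (fun x => Real.log (w x)) l (𝓝 0) := by
    simpa [Function.comp_def] using (Real.continuousAt_log one_ne_zero).tendsto.comp hw
  have hexp : Tendsto (fun x => (Real.log (w x) : ℂ) * (c + b * g x)) l (𝓝 (b * a)) := by
    have := ((Complex.continuous_ofReal.tendsto _).comp hlog).const_mul c |>.add
      (((Complex.continuous_ofReal.tendsto _).comp h).const_mul b)
    simp only [Function.comp_def, Complex.ofReal_zero, mul_zero, zero_add] at this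
    refine this.congr fun x => ?_
    push_cast
    ring
  refine ((Complex.continuous_exp.tendsto _).comp hexp).congr' ?_
  filter_upwards [hw.eventually (eventually_gt_nhds one_pos)] with x hx
  rw [Complex.cpow_def_of_ne_zero (by exact_mod_cast (by linarith : w x ≠ 0)),
    ← Complex.ofReal_log (by linarith)]
  rfl

lemma tendsto_mink_xpt_pvec_sub (m t q p₁ : ℝ) :
    Tendsto (fun r : ℝ => mink (xpt t q r) (pvec m p₁) - m * r) atTop
      (𝓝 (t * Real.sqrt (p₁ ^ 2 + m ^ 2) - q * p₁)) := by
  set E := Real.sqrt (p₁ ^ 2 + m ^ 2)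
  have hsinh := tendsto_mul_sub_comp_div_of_hasDerivAt (Real.hasDerivAt_sinh 0) t
  have hcosh := tendsto_mul_sub_comp_div_of_hasDerivAt (Real.hasDerivAt_cosh 0) t
  have hhoro : Tendsto (fun r : ℝ => q ^ 2 / (2 * r) * Real.exp (-t / r)) atTop (𝓝 0) := by
    have hinv : Tendsto (fun r : ℝ => q ^ 2 / (2 * r)) atTop (𝓝 0) :=
      tendsto_const_nhds.div_atTop (tendsto_id.const_mul_atTop two_pos)
    simpa using hinv.mul ((Real.continuous_exp.tendsto 0).comp
      (tendsto_const_nhds.div_atTop tendsto_id))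
  have hsum := ((hsinh.const_mul E).add (hhoro.const_mul (E - m))).sub_const (q * p₁) |>.add
    (hcosh.const_mul m)
  simp only [Real.sinh_zero, Real.cosh_zero, sub_zero, mul_one, mul_zero, add_zero] at hsum
  refine Tendsto.congr (fun r => ?_) (by convert hsum using 2; ring)
  simp [mink, xpt, pvec, E]
  ring

/-- flat-space limit of de Sitter plane waves: `x_r ∈ dS_r` (and equals
`Λ₁(t/r) D(q/r) (0,0,r)`); `η(x_r,p)/(mr) → 1` as `r → ∞` (so `η(x_r,p) > 0`
eventually); and `(η(x_r,p)/(mr))^{−1/2 − imr} → exp(−i(t√(p₁²+m²) − q p₁))`. -/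
theorem flat_space_limit (m : ℝ) (hm : 0 < m) (t q p₁ : ℝ) :
    (∀ r : ℝ, 0 < r → xpt t q r = (B1 (t / r) * Dm (q / r)).mulVec ![0, 0, r]) ∧
    (∀ r : ℝ, 0 < r → Qf (xpt t q r) = -r ^ 2) ∧
    Filter.Tendsto (fun r : ℝ => mink (xpt t q r) (pvec m p₁) / (m * r))
      Filter.atTop (nhds 1) ∧
    (∀ᶠ r : ℝ in Filter.atTop, 0 < mink (xpt t q r) (pvec m p₁)) ∧
    Filter.Tendsto
      (fun r : ℝ => ((mink (xpt t q r) (pvec m p₁) / (m * r) : ℝ) : ℂ) ^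
        (-(1 / 2 : ℂ) - Complex.I * (m : ℂ) * (r : ℂ)))
      Filter.atTop
      (nhds (Complex.exp (-Complex.I *
        ((t * Real.sqrt (p₁ ^ 2 + m ^ 2) - q * p₁ : ℝ) : ℂ)))) := by
  set η := fun r : ℝ => mink (xpt t q r) (pvec m p₁)
  have hshift := tendsto_mink_xpt_pvec_sub m t q p₁
  have hmr : Tendsto (fun r : ℝ => m * r) atTop atTop := tendsto_id.const_mul_atTop hm
  have hmul : ∀ᶠ r in atTop, η r - m * r = m * r * (η r / (m * r) - 1) := by
    filter_upwards [eventually_gt_atTop 0] with r hr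
    field_simp
  have hw : Tendsto (fun r => η r / (m * r)) atTop (𝓝 1) := by
    have := (hshift.div_atTop hmr).const_add 1
    rw [add_zero] at this
    refine this.congr' ?_
    filter_upwards [eventually_gt_atTop 0] with r hr
    field_simp
    ring
  have hcpow := hw.ofReal_cpow_const_add_mul (hw.mul_log_of_mul_sub_one (hshift.congr' hmul))
    (-(1 / 2)) (-Complex.I)
  have hpos : ∀ᶠ r in atTop, 0 < η r := by
    refine ((hshift.add_atTop hmr).congr fun r => ?_).eventually_gt_atTop 0
    ring
  refine ⟨fun r hr => xpt_eq_mulVec t q hr.ne', fun r hr => Qf_xpt t q hr.ne', hw, hpos,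
    hcpow.congr fun r => ?_⟩
  congr 1
  push_cast
  ring
end
end
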